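/- For every infinite set of real numbers X, the following are equivalent: (1) X satisfies binom(B_Ω,B_T), that is, every countable Borel ω-cover of X contains a τ-cover of X; (2) for each Borel image Y of X in [ℕ]^∞, if Y is centered, then there exists a ∈ [ℕ]^∞ such that the restriction Y↾a = {y ∩ a : y ∈ Y} consists only of infinite sets and is linearly quasiordered by ⊆*. -/
import Mathlib


open Set

namespace TauCoverPaper

/-- `a ⊆* b`: `a \ b` is finite. -/
def AlmostSubset (a b : Set ℕ) : Prop := (a \ b).Finite

/-- `Y` is linearly quasiordered by `⊆*`. -/
def LinQuasi (Y : Set (Set ℕ)) : Prop :=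
  ∀ a ∈ Y, ∀ b ∈ Y, AlmostSubset a b ∨ AlmostSubset b a

/-- `a` is a pseudo-intersection of the family `Y`. -/
def PseudoIntersection (a : Set ℕ) (Y : Set (Set ℕ)) : Prop :=
  a.Infinite ∧ ∀ b ∈ Y, AlmostSubset a b

/-- `Y` is centered: every nonempty finite subfamily has infinite intersection. -/
def Centered (Y : Set (Set ℕ)) : Prop :=
  ∀ F : Set (Set ℕ), F ⊆ Y → F.Finite → F.Nonempty → (⋂₀ F).Infinite

/-- A tower: a family of infinite subsets of `ℕ`, linearly quasiordered by `⊆*`,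
with no pseudo-intersection. -/
def IsTower (Y : Set (Set ℕ)) : Prop :=
  (∀ a ∈ Y, a.Infinite) ∧ LinQuasi Y ∧ ¬ ∃ a, PseudoIntersection a Y

variable {α : Type}

/-- A cover of the space `α`: the union is everything, and the whole space is
not a member. -/
def IsCover (𝒰 : Set (Set α)) : Prop := ⋃₀ 𝒰 = univ ∧ univ ∉ 𝒰

/-- A large cover: each point belongs to infinitely many members. -/
def IsLargeCover (𝒰 : Set (Set α)) : Prop :=
  IsCover 𝒰 ∧ ∀ x : α, {U ∈ 𝒰 | x ∈ U}.Infinite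

/-- An ω-cover: each finite set is contained in some member. -/
def IsOmegaCover (𝒰 : Set (Set α)) : Prop :=
  IsCover 𝒰 ∧ ∀ F : Set α, F.Finite → ∃ U ∈ 𝒰, F ⊆ U

/-- A γ-cover: infinite, and each point belongs to all but finitely many members. -/
def IsGammaCover (𝒰 : Set (Set α)) : Prop :=
  IsCover 𝒰 ∧ 𝒰.Infinite ∧ ∀ x : α, {U ∈ 𝒰 | x ∉ U}.Finite

/-- A τ-cover: a large cover such that for all `x, y`, one of the sets
`{U : x ∈ U, y ∉ U}`, `{U : y ∈ U, x ∉ U}` is finite. -/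
def IsTauCover (𝒰 : Set (Set α)) : Prop :=
  IsLargeCover 𝒰 ∧ ∀ x y : α,
    {U ∈ 𝒰 | x ∈ U ∧ y ∉ U}.Finite ∨ {U ∈ 𝒰 | y ∈ U ∧ x ∉ U}.Finite

/-- A τ*-cover: a large, countably infinite cover which, enumerated bijectively
as `⟨Uₙ⟩`, admits for each point `y` an infinite `r y ⊆ {n | y ∈ Uₙ}` such that
the family `{r y}` is linearly quasiordered by `⊆*`. -/
def IsTauStarCover (𝒰 : Set (Set α)) : Prop :=
  IsLargeCover 𝒰 ∧
  ∃ U : ℕ → Set α, Function.Injective U ∧ Set.range U = 𝒰 ∧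
    ∃ r : α → Set ℕ,
      (∀ y : α, (r y).Infinite ∧ r y ⊆ {n | y ∈ U n}) ∧
      (∀ y z : α, AlmostSubset (r y) (r z) ∨ AlmostSubset (r z) (r y))

/-- Ω : countable open ω-covers. -/
def OpenOmega (α : Type) [TopologicalSpace α] : Set (Set (Set α)) :=
  {𝒰 | 𝒰.Countable ∧ (∀ U ∈ 𝒰, IsOpen U) ∧ IsOmegaCover 𝒰}

/-- Γ : countable open γ-covers. -/
def OpenGamma (α : Type) [TopologicalSpace α] : Set (Set (Set α)) :=
  {𝒰 | 𝒰.Countable ∧ (∀ U ∈ 𝒰, IsOpen U) ∧ IsGammaCover 𝒰}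

/-- T : countable open τ-covers. -/
def OpenTau (α : Type) [TopologicalSpace α] : Set (Set (Set α)) :=
  {𝒰 | 𝒰.Countable ∧ (∀ U ∈ 𝒰, IsOpen U) ∧ IsTauCover 𝒰}

/-- T* : countable open τ*-covers. -/
def OpenTauStar (α : Type) [TopologicalSpace α] : Set (Set (Set α)) :=
  {𝒰 | 𝒰.Countable ∧ (∀ U ∈ 𝒰, IsOpen U) ∧ IsTauStarCover 𝒰}

/-- B_Ω : countable Borel ω-covers. -/
def BorelOmega (α : Type) [MeasurableSpace α] : Set (Set (Set α)) :=
  {𝒰 | 𝒰.Countable ∧ (∀ U ∈ 𝒰, MeasurableSet U) ∧ IsOmegaCover 𝒰}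

/-- B_Γ : countable Borel γ-covers. -/
def BorelGamma (α : Type) [MeasurableSpace α] : Set (Set (Set α)) :=
  {𝒰 | 𝒰.Countable ∧ (∀ U ∈ 𝒰, MeasurableSet U) ∧ IsGammaCover 𝒰}

/-- B_T : countable Borel τ-covers. -/
def BorelTau (α : Type) [MeasurableSpace α] : Set (Set (Set α)) :=
  {𝒰 | 𝒰.Countable ∧ (∀ U ∈ 𝒰, MeasurableSet U) ∧ IsTauCover 𝒰}

/-- The selection principle S₁(𝔘,𝔙). -/
def S1 (𝔘 𝔙 : Set (Set (Set α))) : Prop :=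
  ∀ 𝒰 : ℕ → Set (Set α), (∀ n, 𝒰 n ∈ 𝔘) →
    ∃ V : ℕ → Set α, (∀ n, V n ∈ 𝒰 n) ∧ Set.range V ∈ 𝔙

/-- The selection principle Sfin(𝔘,𝔙). -/
def Sfin (𝔘 𝔙 : Set (Set (Set α))) : Prop :=
  ∀ 𝒰 : ℕ → Set (Set α), (∀ n, 𝒰 n ∈ 𝔘) →
    ∃ F : ℕ → Set (Set α), (∀ n, (F n).Finite ∧ F n ⊆ 𝒰 n) ∧ (⋃ n, F n) ∈ 𝔙

/-- The selection principle Ufin(𝔘,𝔙). -/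
def Ufin (𝔘 𝔙 : Set (Set (Set α))) : Prop :=
  ∀ 𝒰 : ℕ → Set (Set α), (∀ n, 𝒰 n ∈ 𝔘) →
    (∀ n, ¬ ∃ F : Set (Set α), F ⊆ 𝒰 n ∧ F.Finite ∧ ⋃₀ F = univ) →
    ∃ F : ℕ → Set (Set α), (∀ n, (F n).Finite ∧ F n ⊆ 𝒰 n) ∧
      Set.range (fun n => ⋃₀ (F n)) ∈ 𝔙

/-- binom(𝔘,𝔙): each member of 𝔘 contains a subfamily belonging to 𝔙. -/
def Binom (𝔘 𝔙 : Set (Set (Set α))) : Prop :=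
  ∀ 𝒰 ∈ 𝔘, ∃ 𝒱 ⊆ 𝒰, 𝒱 ∈ 𝔙

/-- Borel measurability of a map into `P(ℕ)` (identified with the Cantor
space via characteristic functions): each coordinate is measurable. -/
def BorelMeasSets {β : Type} [MeasurableSpace β] (f : β → Set ℕ) : Prop :=
  ∀ n : ℕ, MeasurableSet {x | n ∈ f x}

/-- The excluded middle property for a family `Y ⊆ ℕ^ℕ`. -/
def ExcludedMiddleProp (Y : Set (ℕ → ℕ)) : Prop :=
  ∃ g : ℕ → ℕ,
    (∀ f ∈ Y, {n | f n < g n}.Infinite) ∧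
    ∀ f ∈ Y, ∀ h ∈ Y,
      {n | f n < g n ∧ g n ≤ h n}.Finite ∨ {n | h n < g n ∧ g n ≤ f n}.Finite

/-- non(J): the minimal cardinality of a set of reals not satisfying `J`. -/
noncomputable def nonCard (J : Set ℝ → Prop) : Cardinal :=
  sInf {c : Cardinal | ∃ X : Set ℝ, ¬ J X ∧ Cardinal.mk ↥X = c}

/-- add(J): the minimal cardinality of a family of sets of reals, each
satisfying `J`, whose union does not satisfy `J`. -/
noncomputable def addCard (J : Set ℝ → Prop) : Cardinal :=
  sInf {c : Cardinal | ∃ 𝔉 : Set (Set ℝ),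
    (∀ A ∈ 𝔉, J A) ∧ ¬ J (⋃₀ 𝔉) ∧ Cardinal.mk ↥𝔉 = c}

/-- 𝔱 : the minimal cardinality of a tower. -/
noncomputable def towerCard : Cardinal :=
  sInf {c : Cardinal | ∃ Y : Set (Set ℕ), IsTower Y ∧ Cardinal.mk ↥Y = c}


/-- In an infinite space, every ω-cover contains infinitely many members
containing any given finite set. -/
lemma omegaCover_filter_infinite {α : Type} [Infinite α] {𝒰 : Set (Set α)}
    (h : IsOmegaCover 𝒰) {F : Set α} (hF : F.Finite) :
    {U ∈ 𝒰 | F ⊆ U}.Infinite := by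
  by_contra hcon
  rw [Set.not_infinite] at hcon
  have hfin := hcon
  -- choice of a missing point for each proper subset
  have hpt : ∀ U ∈ {U ∈ 𝒰 | F ⊆ U}, ∃ x, x ∉ U := by
    intro U hU
    by_contra hc
    push_neg at hc
    have : U = univ := eq_univ_of_forall hc
    exact h.1.2 (this ▸ hU.1)
  classical
  let g : Set α → α := fun U => if hh : ∃ x, x ∉ U then hh.choose else Classical.arbitrary α
  have hg : ∀ U ∈ {U ∈ 𝒰 | F ⊆ U}, g U ∉ U := by
    intro U hU
    have hex : ∃ x, x ∉ U := hpt U hU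
    simp only [g, dif_pos hex]
    exact hex.choose_spec
  have hF' : (F ∪ g '' {U ∈ 𝒰 | F ⊆ U}).Finite := hF.union (hfin.image g)
  obtain ⟨W, hW, hFW⟩ := h.2 _ hF'
  have hWmem : W ∈ {U ∈ 𝒰 | F ⊆ U} := ⟨hW, subset_trans subset_union_left hFW⟩
  exact hg W hWmem (hFW (Or.inr ⟨W, hWmem, rfl⟩))

/-- An infinite countable set is the range of an injection from ℕ. -/
lemma exists_enum {β : Type} {s : Set β} (hc : s.Countable) (hi : s.Infinite) :
    ∃ U : ℕ → β, Function.Injective U ∧ Set.range U = s := by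
  haveI : Countable ↥s := hc.to_subtype
  haveI : Infinite ↥s := hi.to_subtype
  obtain ⟨d⟩ := nonempty_denumerable ↥s
  refine ⟨fun n => ((Denumerable.eqv ↥s).symm n : β), ?_, ?_⟩
  · intro m n hmn
    have := Subtype.coe_injective hmn
    exact (Denumerable.eqv ↥s).symm.injective this
  · ext b
    constructor
    · rintro ⟨n, rfl⟩; exact ((Denumerable.eqv ↥s).symm n).2
    · intro hb
      exact ⟨Denumerable.eqv ↥s ⟨b, hb⟩, by simp⟩

/-- `X` satisfies binom(B_Ω,B_T) iff every centered Borel image `Y` of `X` in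
`[ℕ]^∞` has a large restriction `Y↾a` linearly quasiordered by `⊆*`. -/
theorem statement10 (X : Set ℝ) (hX : X.Infinite) :
    Binom (BorelOmega ↥X) (BorelTau ↥X) ↔
      ∀ f : ↥X → Set ℕ, BorelMeasSets f → (∀ x, (f x).Infinite) →
        Centered (Set.range f) →
        ∃ a : Set ℕ, a.Infinite ∧
          (∀ y ∈ Set.range f, (y ∩ a).Infinite) ∧
          LinQuasi ((fun y => y ∩ a) '' Set.range f) := by
  classical
  haveI : Infinite ↥X := hX.to_subtype
  haveI : Nonempty ↥X := inferInstance
  constructor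
  · -- binom → combinatorial property
    intro hB f hfmeas hfinf hcent
    set U : ℕ → Set ↥X := fun n => {x | n ∈ f x} with hU
    set A : Set ℕ := {n | U n = univ} with hA
    by_cases hAinf : A.Infinite
    · -- trivial case: A itself works
      refine ⟨A, hAinf, ?_, ?_⟩
      · rintro y ⟨x, rfl⟩
        have hsub : A ⊆ f x := by
          intro n hn
          have : (x : ↥X) ∈ U n := by rw [hn]; trivial
          exact this
        have : f x ∩ A = A := by
          apply Set.eq_of_subset_of_subset inter_subset_right
          intro n hn; exact ⟨hsub hn, hn⟩
        rw [this]; exact hAinf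
      · rintro b ⟨y, ⟨x, rfl⟩, rfl⟩ c ⟨z, ⟨w, rfl⟩, rfl⟩
        left
        have h1 : A ⊆ f w := fun n hn => show (w : ↥X) ∈ U n by rw [hn]; trivial
        apply Set.Finite.subset (Set.finite_empty)
        intro n hn
        exact absurd ⟨h1 hn.1.2, hn.1.2⟩ hn.2
    · -- main case
      rw [Set.not_infinite] at hAinf
      set 𝒰 : Set (Set ↥X) := U '' Aᶜ with h𝒰
      have hcov : IsOmegaCover 𝒰 := by
        constructor
        · constructor
          · apply eq_univ_of_forall
            intro x
            obtain ⟨n, hn1, hn2⟩ := ((hfinf x).diff hAinf).nonempty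
            exact ⟨U n, ⟨n, hn2, rfl⟩, hn1⟩
          · rintro ⟨n, hn, hUn⟩
            exact hn hUn
        · intro F hF
          rcases F.eq_empty_or_nonempty with rfl | hFne
          · obtain ⟨x⟩ := (inferInstance : Nonempty ↥X)
            obtain ⟨n, _, hn2⟩ := ((hfinf x).diff hAinf).nonempty
            exact ⟨U n, ⟨n, hn2, rfl⟩, empty_subset _⟩
          · have hG : (f '' F).Finite := hF.image f
            have hGsub : f '' F ⊆ Set.range f := image_subset_range f F
            have hGne : (f '' F).Nonempty := hFne.image f
            have hint := hcent (f '' F) hGsub hG hGne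
            obtain ⟨n, hn1, hn2⟩ := (hint.diff hAinf).nonempty
            refine ⟨U n, ⟨n, hn2, rfl⟩, ?_⟩
            intro x hx
            exact hn1 (f x) ⟨x, hx, rfl⟩
      have h𝒰mem : 𝒰 ∈ BorelOmega ↥X := by
        refine ⟨(Set.countable_range U).mono (image_subset_range U _), ?_, hcov⟩
        rintro V ⟨n, -, rfl⟩
        exact hfmeas n
      obtain ⟨𝒱, h𝒱sub, h𝒱cnt, h𝒱meas, h𝒱tau⟩ := hB 𝒰 h𝒰mem
      set a : Set ℕ := {n | U n ∈ 𝒱 ∧ ∀ m < n, U m ≠ U n} with ha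
      have hainj : Set.InjOn U a := by
        intro m hm n hn hmn
        rcases lt_trichotomy m n with h | h | h
        · exact absurd (hn.2 m h) (not_not.mpr hmn)
        · exact h
        · exact absurd (hm.2 n h) (not_not.mpr hmn.symm)
      have himg : U '' a = 𝒱 := by
        apply Set.eq_of_subset_of_subset
        · rintro V ⟨n, hn, rfl⟩; exact hn.1
        · intro V hV
          have hex : ∃ k, U k = V := by
            obtain ⟨k, -, hk⟩ := h𝒱sub hV
            exact ⟨k, hk⟩
          refine ⟨Nat.find hex, ⟨?_, ?_⟩, Nat.find_spec hex⟩
          · rw [Nat.find_spec hex]; exact hV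
          · intro m hm hme
            exact Nat.find_min hex hm (hme.trans (Nat.find_spec hex))
      have h𝒱inf : 𝒱.Infinite := by
        obtain ⟨x⟩ := (inferInstance : Nonempty ↥X)
        exact (h𝒱tau.1.2 x).mono (sep_subset _ _)
      have hfa : ∀ x : ↥X, U '' (f x ∩ a) = {V ∈ 𝒱 | x ∈ V} := by
        intro x
        apply Set.eq_of_subset_of_subset
        · rintro V ⟨n, ⟨hn1, hn2⟩, rfl⟩
          exact ⟨hn2.1, hn1⟩
        · rintro V ⟨hV1, hV2⟩
          have : V ∈ U '' a := himg.symm ▸ hV1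
          obtain ⟨n, hn, rfl⟩ := this
          exact ⟨n, ⟨hV2, hn⟩, rfl⟩
      refine ⟨a, ?_, ?_, ?_⟩
      · exact Set.Infinite.of_image U (himg.symm ▸ h𝒱inf)
      · rintro y ⟨x, rfl⟩
        apply Set.Infinite.of_image U
        rw [hfa x]
        exact h𝒱tau.1.2 x
      · rintro b ⟨y, ⟨x, rfl⟩, rfl⟩ c ⟨z, ⟨w, rfl⟩, rfl⟩
        rcases h𝒱tau.2 x w with h | h
        · left
          apply Set.Finite.of_finite_image (f := U)
          · apply h.subset
            rintro V ⟨n, ⟨⟨hn1, hn2⟩, hn3⟩, rfl⟩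
            refine ⟨hn2.1, hn1, ?_⟩
            intro hw
            exact hn3 ⟨hw, hn2⟩
          · exact hainj.mono (fun n hn => (Set.diff_subset hn).2)
        · right
          apply Set.Finite.of_finite_image (f := U)
          · apply h.subset
            rintro V ⟨n, ⟨⟨hn1, hn2⟩, hn3⟩, rfl⟩
            refine ⟨hn2.1, hn1, ?_⟩
            intro hw
            exact hn3 ⟨hw, hn2⟩
          · exact hainj.mono (fun n hn => (Set.diff_subset hn).2)
  · -- combinatorial property → binom
    intro hcomb 𝒰 h𝒰
    obtain ⟨hcnt, hmeas, homega⟩ := h𝒰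
    have h𝒰inf : 𝒰.Infinite := by
      have := omegaCover_filter_infinite homega (Set.finite_empty (α := ↥X))
      apply this.mono
      rintro V ⟨hV, -⟩; exact hV
    obtain ⟨U, hUinj, hUrange⟩ := exists_enum hcnt h𝒰inf
    set f : ↥X → Set ℕ := fun x => {n | x ∈ U n} with hf
    have hUmem : ∀ n, U n ∈ 𝒰 := fun n => hUrange ▸ Set.mem_range_self n
    have key : ∀ F : Set ↥X, F.Finite → {n | F ⊆ U n}.Infinite := by
      intro F hF
      apply Set.Infinite.of_image U
      have : U '' {n | F ⊆ U n} = {V ∈ 𝒰 | F ⊆ V} := by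
        apply Set.eq_of_subset_of_subset
        · rintro V ⟨n, hn, rfl⟩; exact ⟨hUmem n, hn⟩
        · rintro V ⟨hV1, hV2⟩
          obtain ⟨n, rfl⟩ := hUrange ▸ hV1
          exact ⟨n, hV2, rfl⟩
      rw [this]
      exact omegaCover_filter_infinite homega hF
    have hfmeas : BorelMeasSets f := by
      intro n
      have : {x | n ∈ f x} = U n := rfl
      rw [this]
      exact hmeas _ (hUmem n)
    have hfinf : ∀ x, (f x).Infinite := by
      intro x
      have : f x = {n | {x} ⊆ U n} := by ext n; simp [hf]
      rw [this]
      exact key {x} (finite_singleton x)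
    have hfcent : Centered (Set.range f) := by
      intro G hGsub hGfin hGne
      let g : Set ℕ → ↥X := fun b =>
        if hh : ∃ x, f x = b then hh.choose else Classical.arbitrary ↥X
      have hg : ∀ b ∈ G, f (g b) = b := by
        intro b hb
        have hex : ∃ x, f x = b := hGsub hb
        simp only [g, dif_pos hex]
        exact hex.choose_spec
      have hT : (g '' G).Finite := hGfin.image g
      apply (key _ hT).mono
      intro n hn b hb
      have : g b ∈ U n := hn ⟨b, hb, rfl⟩
      rw [← hg b hb]
      exact this
    obtain ⟨a, hainf, hya, hlin⟩ := hcomb f hfmeas hfinf hfcent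
    refine ⟨U '' a, ?_, ?_, ?_, ?_, ?_⟩
    · rintro V ⟨n, -, rfl⟩; exact hUmem n
    · exact (a.to_countable).image U
    · rintro V ⟨n, -, rfl⟩; exact hmeas _ (hUmem n)
    · constructor
      · constructor
        · apply eq_univ_of_forall
          intro x
          obtain ⟨n, hn1, hn2⟩ := (hya (f x) (mem_range_self x)).nonempty
          exact ⟨U n, ⟨n, hn2, rfl⟩, hn1⟩
        · rintro ⟨n, -, hUn⟩
          exact homega.1.2 (hUn ▸ hUmem n)
      · intro x
        have : {V ∈ U '' a | x ∈ V} = U '' (f x ∩ a) := by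
          apply Set.eq_of_subset_of_subset
          · rintro V ⟨⟨n, hn, rfl⟩, hx⟩
            exact ⟨n, ⟨hx, hn⟩, rfl⟩
          · rintro V ⟨n, ⟨hn1, hn2⟩, rfl⟩
            exact ⟨⟨n, hn2, rfl⟩, hn1⟩
        rw [this]
        exact Set.Infinite.image (hUinj.injOn) (hya (f x) (mem_range_self x))
    · intro x y
      have heq : ∀ x y : ↥X, {V ∈ U '' a | x ∈ V ∧ y ∉ V} = U '' ((f x ∩ a) \ (f y ∩ a)) := by
        intro x y
        apply Set.eq_of_subset_of_subset
        · rintro V ⟨⟨n, hn, rfl⟩, hx, hy⟩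
          exact ⟨n, ⟨⟨hx, hn⟩, fun h => hy h.1⟩, rfl⟩
        · rintro V ⟨n, ⟨⟨hn1, hn2⟩, hn3⟩, rfl⟩
          exact ⟨⟨n, hn2, rfl⟩, hn1, fun h => hn3 ⟨h, hn2⟩⟩
      rcases hlin (f x ∩ a) ⟨f x, mem_range_self x, rfl⟩ (f y ∩ a) ⟨f y, mem_range_self y, rfl⟩ with h | h
      · left; rw [heq x y]; exact h.image U
      · right; rw [heq y x]; exact h.image U


end TauCoverPaper
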